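/- arXiv:1008.0905 — 2 statements merged into one kernel-verified Lean document; each statement's English description precedes it below -/
import Mathlib

section
/- Let α < β be real numbers with β − α < π, let M > 0, and set S = {r e^{iθ} : r ≥ M, α ≤ θ ≤ β} ⊂ ℂ. Suppose A is holomorphic on an open set containing S and A(μ) → 0 as |μ| → ∞ with μ ∈ S. Then there exist real numbers α̃, β̃ with α ≤ α̃ < β̃ ≤ β and M̃ ≥ M such that the map μ ↦ μ·(1 + A(μ)) is injective on the set {r e^{iθ} : r ≥ M̃, α̃ ≤ θ ≤ β̃}. -/
/-!
Put `g μ = μ * A μ`, let `γ ± h` be the edges of the sector and take the subsector of half the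
aperture. It lies in a convex truncated cone `T` (aperture `h / 2` about the bisector, cut off by a
line far from the origin), and every `w ∈ T` is the centre of a disc of radius `δ‖w‖`, with
`δ = (cos (h / 2) - cos h) / 2`, contained in the far part of the sector, where `‖A‖ ≤ ε`.
Cauchy's estimate on that disc gives `‖w * A' w‖ ≤ 2ε / δ`, so `‖g'‖ ≤ ε (1 + 2 / δ) < 1` on `T`
for `ε` small. By the mean value inequality on the convex set `T`, `g` is a contraction there, and
`μ ↦ μ + g μ` is injective on `T`.
-/

open Complex Real Filter Set Metric Topology

lemma injOn_add_of_norm_sub_le {E : Type*} [NormedAddCommGroup E] {g : E → E} {s : Set E} {c : ℝ}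
    (hc : c < 1) (hg : ∀ x ∈ s, ∀ y ∈ s, ‖g x - g y‖ ≤ c * ‖x - y‖) :
    InjOn (fun x => x + g x) s := by
  intro x hx y hy hxy
  have hdist : ‖x - y‖ ≤ c * ‖x - y‖ := by
    calc ‖x - y‖ = ‖g y - g x‖ := by
          rw [sub_eq_sub_iff_add_eq_add.2 (by rw [add_comm (g y)]; exact hxy)]
      _ ≤ c * ‖y - x‖ := hg y hy x hx
      _ = c * ‖x - y‖ := by rw [norm_sub_rev]
  have : ‖x - y‖ = 0 := by nlinarith [norm_nonneg (x - y)]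
  exact sub_eq_zero.1 (norm_eq_zero.1 this)

lemma exists_forall_norm_le_of_tendsto {E F : Type*} [Norm E] [SeminormedAddCommGroup F]
    {f : E → F} {s : Set E} (hf : Tendsto f (comap (fun z => ‖z‖) atTop ⊓ 𝓟 s) (𝓝 0))
    {ε : ℝ} (hε : 0 < ε) : ∃ R, ∀ z ∈ s, R ≤ ‖z‖ → ‖f z‖ ≤ ε := by
  have := hf.eventually_mem (closedBall_mem_nhds 0 hε)
  rw [eventually_inf_principal, eventually_comap, eventually_atTop] at this
  obtain ⟨R, hR⟩ := this
  exact ⟨R, fun z hz hRz => mem_closedBall_zero_iff.1 (hR ‖z‖ hRz z rfl hz)⟩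

lemma norm_add_mul_deriv_le {A : ℂ → ℂ} {w : ℂ} {δ ε : ℝ} (hδ : 0 < δ) (hw : w ≠ 0)
    (hA : DifferentiableOn ℂ A (ball w (δ * ‖w‖)))
    (hAε : ∀ z ∈ ball w (δ * ‖w‖), ‖A z‖ ≤ ε) :
    ‖A w + w * deriv A w‖ ≤ ε * (1 + 2 / δ) := by
  have hρ : 0 < δ * ‖w‖ := mul_pos hδ (norm_pos_iff.2 hw)
  have hAw : ‖A w‖ ≤ ε := hAε w (mem_ball_self hρ)
  have hmaps : MapsTo A (ball w (δ * ‖w‖)) (closedBall (A w) (2 * ε)) := fun z hz => by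
    rw [mem_closedBall, dist_eq_norm]
    linarith [norm_sub_le (A z) (A w), hAε z hz]
  have hcauchy := Complex.norm_deriv_le_div_of_mapsTo_ball hA hmaps hρ
  calc ‖A w + w * deriv A w‖ ≤ ‖A w‖ + ‖w‖ * ‖deriv A w‖ := by
        rw [← norm_mul]; exact norm_add_le _ _
    _ ≤ ε + ‖w‖ * (2 * ε / (δ * ‖w‖)) := by gcongr
    _ = ε * (1 + 2 / δ) := by field_simp

lemma Convex.norm_mul_sub_mul_le {A : ℂ → ℂ} {T V : Set ℂ} {δ ε : ℝ} (hT : Convex ℝ T)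
    (hδ : 0 < δ) (hT₀ : ∀ w ∈ T, w ≠ 0) (hTV : ∀ w ∈ T, ball w (δ * ‖w‖) ⊆ V)
    (hA : DifferentiableOn ℂ A V) (hAε : ∀ z ∈ V, ‖A z‖ ≤ ε) :
    ∀ z₁ ∈ T, ∀ z₂ ∈ T, ‖z₁ * A z₁ - z₂ * A z₂‖ ≤ ε * (1 + 2 / δ) * ‖z₁ - z₂‖ := by
  have hderiv : ∀ w ∈ T, HasDerivAt (fun z => z * A z) (A w + w * deriv A w) w := fun w hw => by
    have hρ : 0 < δ * ‖w‖ := mul_pos hδ (norm_pos_iff.2 (hT₀ w hw))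
    have hAw : DifferentiableAt ℂ A w :=
      (hA.mono (hTV w hw)).differentiableAt (isOpen_ball.mem_nhds (mem_ball_self hρ))
    simpa only [one_mul] using (hasDerivAt_id' w).fun_mul hAw.hasDerivAt
  intro z₁ h₁ z₂ h₂
  refine hT.norm_image_sub_le_of_norm_hasDerivWithin_le
    (fun w hw => (hderiv w hw).hasDerivWithinAt) (fun w hw => ?_) h₂ h₁
  exact norm_add_mul_deriv_le hδ (hT₀ w hw) (hA.mono (hTV w hw)) fun z hz => hAε z (hTV w hw hz)

def sector (M α β : ℝ) : Set ℂ :=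
  {z : ℂ | ∃ r θ : ℝ, M ≤ r ∧ α ≤ θ ∧ θ ≤ β ∧ z = r * Complex.exp (θ * Complex.I)}

/-- For `0 ≤ h ≤ π`, the first condition says that `z` lies within angle `h` of the ray through
`exp (γ * I)`. -/
def truncatedCone (γ h c : ℝ) : Set ℂ :=
  {z : ℂ | ‖z‖ * Real.cos h ≤ (exp (-(γ * I)) * z).re ∧ c ≤ (exp (-(γ * I)) * z).re}

lemma ne_zero_of_mem_truncatedCone {γ h c : ℝ} (hc : 0 < c) {w : ℂ}
    (hw : w ∈ truncatedCone γ h c) : w ≠ 0 := by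
  rintro rfl
  simpa [hc.not_ge] using hw.2

lemma norm_exp_neg_ofReal_mul_I (γ : ℝ) : ‖exp (-(γ * I))‖ = 1 := by
  rw [← neg_mul, ← ofReal_neg, norm_exp_ofReal_mul_I]

lemma re_exp_neg_mul_ofReal_mul_exp (γ r θ : ℝ) :
    (exp (-(γ * I)) * (r * exp (θ * I))).re = r * Real.cos (θ - γ) := by
  rw [mul_left_comm, ← Complex.exp_add, show -(γ * I) + θ * I = ((θ - γ : ℝ) : ℂ) * I by
    push_cast; ring, re_ofReal_mul, exp_ofReal_mul_I_re]

lemma mem_sector_iff {M γ h : ℝ} (hM : 0 ≤ M) (h₀ : 0 ≤ h) (hπ : h ≤ π) {z : ℂ} :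
    z ∈ sector M (γ - h) (γ + h) ↔ M ≤ ‖z‖ ∧ ‖z‖ * Real.cos h ≤ (exp (-(γ * I)) * z).re := by
  constructor
  · rintro ⟨r, θ, hMr, hθ₁, hθ₂, rfl⟩
    have hr : ‖(r : ℂ) * exp (θ * I)‖ = r := by
      rw [norm_mul, norm_exp_ofReal_mul_I, mul_one, norm_real, norm_of_nonneg (hM.trans hMr)]
    have hcos : Real.cos h ≤ Real.cos (θ - γ) := by
      rw [← Real.cos_abs (θ - γ)]
      exact Real.cos_le_cos_of_nonneg_of_le_pi (abs_nonneg _) hπ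
        (abs_le.2 ⟨by linarith, by linarith⟩)
    rw [hr, re_exp_neg_mul_ofReal_mul_exp]
    exact ⟨hMr, mul_le_mul_of_nonneg_left hcos (hM.trans hMr)⟩
  · rintro ⟨hMz, hcone⟩
    set w := exp (-(γ * I)) * z
    have hwz : ‖w‖ = ‖z‖ := by rw [norm_mul, norm_exp_neg_ofReal_mul_I, one_mul]
    have harg : |arg w| ≤ h := by
      rcases eq_or_ne w 0 with hw | hw
      · rwa [hw, arg_zero, abs_zero]
      by_contra! hlt
      have hcos : Real.cos (arg w) < Real.cos h := by
        rw [← Real.cos_abs]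
        exact Real.cos_lt_cos_of_nonneg_of_le_pi h₀
          (abs_le.2 ⟨by linarith [neg_pi_lt_arg w], arg_le_pi w⟩) hlt
      rw [cos_arg hw, div_lt_iff₀ (norm_pos_iff.2 hw), hwz] at hcos
      linarith
    obtain ⟨harg₁, harg₂⟩ := abs_le.1 harg
    refine ⟨‖z‖, γ + arg w, hMz, by linarith, by linarith, ?_⟩
    calc z = exp (γ * I) * (‖w‖ * exp (arg w * I)) := by
          rw [norm_mul_exp_arg_mul_I, ← mul_assoc, ← Complex.exp_add, add_neg_cancel,
            Complex.exp_zero, one_mul]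
      _ = ‖z‖ * exp ((γ + arg w : ℝ) * I) := by
          rw [hwz]; push_cast; rw [add_mul, Complex.exp_add]; ring

lemma sector_subset_sector {M α β M' α' β' : ℝ} (hM : M ≤ M') (hα : α ≤ α') (hβ : β' ≤ β) :
    sector M' α' β' ⊆ sector M α β := by
  rintro z ⟨r, θ, hr, hθ₁, hθ₂, rfl⟩
  exact ⟨r, θ, hM.trans hr, hα.trans hθ₁, hθ₂.trans hβ, rfl⟩

lemma convex_truncatedCone {h : ℝ} (hh : 0 ≤ Real.cos h) (γ c : ℝ) :
    Convex ℝ (truncatedCone γ h c) := by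
  intro x hx y hy a b ha hb hab
  have hre : (exp (-(γ * I)) * (a • x + b • y)).re
      = a * (exp (-(γ * I)) * x).re + b * (exp (-(γ * I)) * y).re := by
    simp only [real_smul, mul_add, mul_left_comm _ (a : ℂ), mul_left_comm _ (b : ℂ), add_re,
      re_ofReal_mul]
  have hnorm : ‖a • x + b • y‖ ≤ a * ‖x‖ + b * ‖y‖ := by
    simpa [norm_smul, abs_of_nonneg ha, abs_of_nonneg hb] using norm_add_le (a • x) (b • y)
  refine ⟨?_, ?_⟩
  · rw [hre]
    nlinarith [hx.1, hy.1, mul_le_mul_of_nonneg_right hnorm hh]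
  · have hc : c = a * c + b * c := by rw [← add_mul, hab, one_mul]
    rw [hre]
    nlinarith [mul_le_mul_of_nonneg_left hx.2 ha, mul_le_mul_of_nonneg_left hy.2 hb]

lemma sector_subset_truncatedCone {γ h c : ℝ} (h₀ : 0 ≤ h) (hπ : h < π / 2) (hc : 0 ≤ c) :
    sector (c / Real.cos h) (γ - h) (γ + h) ⊆ truncatedCone γ h c := by
  have hcos : 0 < Real.cos h := Real.cos_pos_of_mem_Ioo ⟨by linarith, hπ⟩
  intro z hz
  obtain ⟨hnorm, hcone⟩ := (mem_sector_iff (div_nonneg hc hcos.le) h₀ (by linarith)).1 hz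
  refine ⟨hcone, le_trans ?_ hcone⟩
  calc c = c / Real.cos h * Real.cos h := by field_simp
    _ ≤ ‖z‖ * Real.cos h := by gcongr

lemma ball_subset_sector {R γ h h' : ℝ} (hR : 0 ≤ R) (h₀ : 0 ≤ h) (hπ : h ≤ π / 2) {w : ℂ}
    (hw : w ∈ truncatedCone γ h' (2 * R)) :
    ball w ((Real.cos h' - Real.cos h) / 2 * ‖w‖) ⊆ sector R (γ - h) (γ + h) := by
  intro z hz
  rw [mem_ball, dist_eq_norm] at hz
  have hcos : 0 ≤ Real.cos h := Real.cos_nonneg_of_mem_Icc ⟨by linarith, hπ⟩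
  have hcos' : Real.cos h' ≤ 1 := Real.cos_le_one h'
  have hwre : (exp (-(γ * I)) * w).re ≤ ‖w‖ := by
    simpa [norm_exp_neg_ofReal_mul_I] using re_le_norm (exp (-(γ * I)) * w)
  have hdre : |(exp (-(γ * I)) * (z - w)).re| ≤ ‖z - w‖ := by
    simpa [norm_exp_neg_ofReal_mul_I] using abs_re_le_norm (exp (-(γ * I)) * (z - w))
  have hzre : (exp (-(γ * I)) * z).re
      = (exp (-(γ * I)) * w).re + (exp (-(γ * I)) * (z - w)).re := by
    rw [← add_re, ← mul_add, add_sub_cancel]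
  have hz₁ : ‖z‖ ≤ ‖w‖ + ‖z - w‖ := by simpa using norm_add_le w (z - w)
  have hz₂ : ‖w‖ ≤ ‖z‖ + ‖z - w‖ := by simpa using norm_sub_le z (z - w)
  rw [mem_sector_iff hR h₀ (by linarith)]
  obtain ⟨hw₁, hw₂⟩ := hw
  have := abs_le.1 hdre
  constructor
  · nlinarith
  · nlinarith [mul_le_mul_of_nonneg_right hz₁ hcos,
      mul_le_mul_of_nonneg_left (Real.cos_le_one h) (norm_nonneg (z - w))]

theorem univalent_on_subsector_general (α β : ℝ) (hαβ : α < β) (hπ : β - α < π) (M : ℝ) (hM : 0 < M)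
    (A : ℂ → ℂ) (U : Set ℂ)
    (hSU : {z : ℂ | ∃ r θ : ℝ, M ≤ r ∧ α ≤ θ ∧ θ ≤ β ∧ z = r * Complex.exp (θ * Complex.I)} ⊆ U)
    (hA : DifferentiableOn ℂ A U)
    (hlim : Tendsto A (comap (fun z : ℂ => ‖z‖) atTop ⊓
        𝓟 {z : ℂ | ∃ r θ : ℝ, M ≤ r ∧ α ≤ θ ∧ θ ≤ β ∧ z = r * Complex.exp (θ * Complex.I)})
      (nhds 0)) :
    ∃ α' β' M' : ℝ, α ≤ α' ∧ α' < β' ∧ β' ≤ β ∧ M ≤ M' ∧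
      Set.InjOn (fun μ : ℂ => μ * (1 + A μ))
        {z : ℂ | ∃ r θ : ℝ, M' ≤ r ∧ α' ≤ θ ∧ θ ≤ β' ∧ z = r * Complex.exp (θ * Complex.I)} := by
  obtain ⟨γ, h, rfl, rfl⟩ : ∃ γ h, α = γ - h ∧ β = γ + h :=
    ⟨(α + β) / 2, (β - α) / 2, by ring, by ring⟩
  have h₀ : 0 < h := by linarith
  have hcos : 0 < Real.cos (h / 2) := Real.cos_pos_of_mem_Ioo ⟨by linarith, by linarith⟩
  set δ := (Real.cos (h / 2) - Real.cos h) / 2 with hδ_def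
  have hδ : 0 < δ := by
    linarith [Real.cos_lt_cos_of_nonneg_of_le_pi (by linarith) (by linarith) (half_lt_self h₀)]
  have hδ' : δ ≤ 1 / 2 := by
    linarith [Real.cos_le_one (h / 2),
      Real.cos_nonneg_of_mem_Icc (x := h) ⟨by linarith, by linarith⟩]
  obtain ⟨R₀, hR₀⟩ := exists_forall_norm_le_of_tendsto hlim (show 0 < δ / 8 by positivity)
  set R := max M R₀
  have hR : 0 < R := hM.trans_le (le_max_left _ _)
  have hV : sector R (γ - h) (γ + h) ⊆ sector M (γ - h) (γ + h) :=
    sector_subset_sector (le_max_left _ _) le_rfl le_rfl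
  have hAε : ∀ z ∈ sector R (γ - h) (γ + h), ‖A z‖ ≤ δ / 8 := fun z hz =>
    hR₀ z (hV hz) ((le_max_right _ _).trans ((mem_sector_iff hR.le h₀.le (by linarith)).1 hz).1)
  have hlip := (convex_truncatedCone hcos.le γ (2 * R)).norm_mul_sub_mul_le hδ
    (fun w => ne_zero_of_mem_truncatedCone (by positivity))
    (fun w hw => ball_subset_sector hR.le h₀.le (by linarith) hw) (hA.mono (hV.trans hSU)) hAε
  have hcontract : δ / 8 * (1 + 2 / δ) < 1 := by
    rw [show δ / 8 * (1 + 2 / δ) = δ / 8 + 1 / 4 by field_simp; ring]; linarith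
  refine ⟨γ - h / 2, γ + h / 2, 2 * R / Real.cos (h / 2), by linarith, by linarith, by linarith,
    ?_, ?_⟩
  · rw [le_div_iff₀ hcos]
    nlinarith [Real.cos_le_one (h / 2), le_max_left M R₀]
  · rw [show (fun μ : ℂ => μ * (1 + A μ)) = fun μ => μ + μ * A μ by funext; ring]
    exact (injOn_add_of_norm_sub_le hcontract hlip).mono
      (sector_subset_truncatedCone (by linarith) (by linarith) (by positivity))

/-- (Univalence) If `A` is holomorphic near the closed sector
`S = {r e^{iθ} : r ≥ M, α ≤ θ ≤ β}` (with `β - α < π`) and `A(μ) → 0` as `|μ| → ∞` in `S`,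
then `μ ↦ μ(1 + A(μ))` is injective on some subsector `{r e^{iθ} : r ≥ M̃, α̃ ≤ θ ≤ β̃}`. -/
theorem univalent_on_subsector (α β : ℝ) (hαβ : α < β) (hπ : β - α < π) (M : ℝ) (hM : 0 < M)
    (A : ℂ → ℂ) (U : Set ℂ) (hUopen : IsOpen U)
    (hSU : {z : ℂ | ∃ r θ : ℝ, M ≤ r ∧ α ≤ θ ∧ θ ≤ β ∧ z = r * Complex.exp (θ * Complex.I)} ⊆ U)
    (hA : DifferentiableOn ℂ A U)
    (hlim : Tendsto A (comap (fun z : ℂ => ‖z‖) atTop ⊓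
        𝓟 {z : ℂ | ∃ r θ : ℝ, M ≤ r ∧ α ≤ θ ∧ θ ≤ β ∧ z = r * Complex.exp (θ * Complex.I)})
      (nhds 0)) :
    ∃ α' β' M' : ℝ, α ≤ α' ∧ α' < β' ∧ β' ≤ β ∧ M ≤ M' ∧
      Set.InjOn (fun μ : ℂ => μ * (1 + A μ))
        {z : ℂ | ∃ r θ : ℝ, M' ≤ r ∧ α' ≤ θ ∧ θ ≤ β' ∧ z = r * Complex.exp (θ * Complex.I)} :=
  univalent_on_subsector_general α β hαβ hπ M hM A U hSU hA hlim
end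

section
/- Fix an integer m ≥ 3 and an integer ℓ with 1 ≤ ℓ ≤ m−1. Then: (i) for every a ∈ ℝ^m and every 0 ≤ j ≤ m+1, c_{ℓ,j}(a) is real; (ii) c_{ℓ,0}(a) = (1/π)·B(1/2, 1+1/m)·sin(ℓπ/m) for every a ∈ ℂ^m, and c_{ℓ,1}(a) = 0 for every a ∈ ℂ^m; (iii) for 1 ≤ j ≤ m, c_{ℓ,j}(a) depends only on a_1, …, a_j (it is unchanged if a_{j+1}, …, a_m are altered); (iv) if gcd(m,ℓ) = 1 and 2 ≤ j ≤ m with j ≠ m/2 + 1, then for each fixed a_1, …, a_{j−1}, the map a_j ↦ c_{ℓ,j}(a) is a nonconstant affine function of a_j. -/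
/-!
With real weights `w_{j,k}` one has `c_{ℓ,j}(a) = ∑ₖ w_{j,k} b_{j,k}(a)`, so everything reduces
to the coefficients `b_{j,k}`. They are real for real `a`, since polynomials with real coefficients
are closed under powers. The coefficient of `z^{-j}` in `(a₁/z + ⋯ + a_m/z^m)^k` only involves
`a₁, …, a_j`, and for `k ≥ 2` not even `a_j`: every term of the binomial expansion containing
`a_j` has degree `> j`. So `a_j` enters `c_{ℓ,j}` only through `b_{j,1} = a_j/2`, with coefficient
`w_{j,1}/2`, which is nonzero: `sin((j-1)ℓπ/m) ≠ 0` by coprimality, `cos((j-1)π/m) ≠ 0` as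
`j ≠ m/2 + 1`, and `K_{m,j,1}` is a Beta value whose arguments avoid the poles of `Γ`.
Finally `c_{ℓ,1} = 0` because its sine factor is `sin 0`.
-/

open Complex Real Filter Set

noncomputable section

/-- The polynomial `a₁ z + a₂ z² + ⋯ + a_m z^m`; its `j`-th coefficient (after taking a
`k`-th power) is the coefficient of `z^{-j}` in `(a₁/z + ⋯ + a_m/z^m)^k`. -/
def Qa (m : ℕ) (a : Fin m → ℂ) : Polynomial ℂ :=
  ∑ i : Fin m, Polynomial.C (a i) * Polynomial.X ^ ((i : ℕ) + 1)

/-- The generalized binomial coefficient `Binom(1/2, k)`. -/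
def halfChoose (k : ℕ) : ℂ :=
  (∏ i ∈ Finset.range k, ((1:ℂ)/2 - (i : ℂ))) / (Nat.factorial k : ℂ)

/-- `b_{j,k}(a)`: the coefficient of `z^{-j}` in `Binom(1/2,k)·(a₁/z + ⋯ + a_m/z^m)^k`. -/
def bjk (m : ℕ) (a : Fin m → ℂ) (j k : ℕ) : ℂ :=
  halfChoose k * (Qa m a ^ k).coeff j

/-- `b_j(a) = ∑_{k=0}^j b_{j,k}(a)`. -/
def bcoef (m : ℕ) (a : Fin m → ℂ) (j : ℕ) : ℂ :=
  ∑ k ∈ Finset.range (j+1), bjk m a j k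

/-- The Beta function `B(x,y) = Γ(x)Γ(y)/Γ(x+y)` on the reals. -/
def betaR (x y : ℝ) : ℝ := Real.Gamma x * Real.Gamma y / Real.Gamma (x + y)

/-- The real constants `K_{m,j,k}` (note `k < j/m ↔ k·m < j`, and for even `m`,
`j = m/2 + 1 ↔ 2j = m + 2`). -/
def Kmjk (m j k : ℕ) : ℝ :=
  if k * m < j then 0
  else if j = 0 ∧ k = 0 then betaR (1/2) (1 + 1/m) / (2 * Real.cos (π/m))
  else if j = 1 ∧ k = 1 then -2/m
  else if Even m ∧ 2*j = m+2 then
    (2/m) * (Real.log 2 - ∑ s ∈ Finset.range (k-1), 1/(2*(s:ℝ)+1))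
  else (1/m) * betaR ((k:ℝ) - ((j:ℝ)-1)/m) (((j:ℝ)-1)/m - 1/2)

/-- `K_{m,j}(a) = ∑_{k=0}^j K_{m,j,k} b_{j,k}(a)`. -/
def Kmj (m : ℕ) (a : Fin m → ℂ) (j : ℕ) : ℂ :=
  ∑ k ∈ Finset.range (j+1), (Kmjk m j k : ℂ) * bjk m a j k

/-- The coefficients
`c_{ℓ,j}(a) = -(2/π) ∑_{k=0}^j (-1)^{(ℓ+1)k} K_{m,j,k} b_{j,k}(a) sin((j-1)ℓπ/m) cos((j-1)π/m)`. -/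
def cCoeff (m ℓ : ℕ) (a : Fin m → ℂ) (j : ℕ) : ℂ :=
  ((-(2/π) : ℝ) : ℂ) * ∑ k ∈ Finset.range (j+1),
    (-1 : ℂ) ^ ((ℓ+1)*k) * (Kmjk m j k : ℂ) * bjk m a j k *
      ((Real.sin (((j:ℝ)-1)*ℓ*π/m) : ℝ) : ℂ) * ((Real.cos (((j:ℝ)-1)*π/m) : ℝ) : ℂ)

/-- `ν(a) = b_{m/2+1}(a)` for even `m`, `0` for odd `m`. -/
def nuA (m : ℕ) (a : Fin m → ℂ) : ℂ := if Even m then bcoef m a (m/2+1) else 0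

/-- `η_ℓ(a) = (-1)^{(ℓ-1)/2}·2ν(a)/m` for odd `ℓ`, `0` otherwise. -/
def etaL (m ℓ : ℕ) (a : Fin m → ℂ) : ℂ :=
  if Odd ℓ then (-1) ^ ((ℓ-1)/2) * (2 * nuA m a / (m : ℂ)) else 0

section PowerCongruence

open Polynomial

theorem pow_sub_one_mul_sub_dvd_pow_sub_pow {R : Type*} [CommRing R] {a x y : R}
    (hx : a ∣ x) (hy : a ∣ y) (k : ℕ) : a ^ (k - 1) * (x - y) ∣ x ^ k - y ^ k := by
  rw [← geom_sum₂_mul]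
  refine mul_dvd_mul_right (Finset.dvd_sum fun i hi => ?_) _
  have hik : i + (k - 1 - i) = k - 1 := by
    have := Finset.mem_range.mp hi
    omega
  rw [show a ^ (k - 1) = a ^ i * a ^ (k - 1 - i) by rw [← pow_add, hik]]
  exact mul_dvd_mul (pow_dvd_pow_of_dvd hx i) (pow_dvd_pow_of_dvd hy _)

theorem Polynomial.coeff_pow_eq_of_coeff_eq {R : Type*} [CommRing R] {p q : R[X]} {n : ℕ}
    (h : ∀ d < n, p.coeff d = q.coeff d) (k : ℕ) :
    ∀ d < n, (p ^ k).coeff d = (q ^ k).coeff d := by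
  have hpq : X ^ n ∣ p - q := X_pow_dvd_iff.mpr fun d hd => by rw [coeff_sub, h d hd, sub_self]
  intro d hd
  rw [← sub_eq_zero, ← coeff_sub]
  exact X_pow_dvd_iff.mp (hpq.trans (sub_dvd_pow_sub_pow p q k)) d hd

theorem Polynomial.coeff_add_C_mul_X_pow_pow {R : Type*} [CommRing R] {q : R[X]} (hq : X ∣ q)
    {j : ℕ} (hj : 1 ≤ j) (t : R) (k : ℕ) :
    ((q + C t * X ^ j) ^ k).coeff j = (q ^ k).coeff j + if k = 1 then t else 0 := by
  rcases lt_trichotomy k 1 with hk | rfl | hk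
  · obtain rfl : k = 0 := by omega
    simp [coeff_one, show j ≠ 0 by omega]
  · simp
  · rw [if_neg hk.ne', add_zero, ← sub_eq_zero, ← coeff_sub]
    have hX : X ∣ q + C t * X ^ j := dvd_add hq (dvd_mul_of_dvd_right (dvd_pow_self X (by omega)) _)
    have hdvd := pow_sub_one_mul_sub_dvd_pow_sub_pow hX hq k
    rw [add_sub_cancel_left, ← mul_assoc, mul_comm _ (C t), mul_assoc, ← pow_add] at hdvd
    exact X_pow_dvd_iff.mp
      ((pow_dvd_pow X (by omega : j + 1 ≤ k - 1 + j)).trans ((dvd_mul_left _ _).trans hdvd)) j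
      (by omega)

end PowerCongruence

section Coefficients

open Polynomial Finset

variable {m : ℕ}

theorem Qa_coeff_succ (a : Fin m → ℂ) (i : Fin m) : (Qa m a).coeff (i + 1) = a i := by
  simp [Qa, coeff_C_mul, coeff_X_pow, Fin.val_inj]

theorem Qa_coeff_zero (a : Fin m → ℂ) : (Qa m a).coeff 0 = 0 := by
  simp [Qa, coeff_X_pow]

theorem X_dvd_Qa (a : Fin m → ℂ) : X ∣ Qa m a :=
  X_dvd_iff.mpr (Qa_coeff_zero a)

theorem Qa_update (a : Fin m → ℂ) (i : Fin m) (t : ℂ) :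
    Qa m (Function.update a i t) = Qa m (Function.update a i 0) + C t * X ^ ((i : ℕ) + 1) := by
  simp only [Qa, ← sum_erase_add _ _ (mem_univ i), Function.update_self, C_0, zero_mul,
    add_zero]
  congr 1
  refine sum_congr rfl fun k hk => ?_
  rw [Function.update_of_ne (ne_of_mem_erase hk), Function.update_of_ne (ne_of_mem_erase hk)]

theorem Qa_mem_lifts {a : Fin m → ℂ} (ha : ∀ i, (a i).im = 0) : Qa m a ∈ lifts ofRealHom := by
  refine Subsemiring.sum_mem _ fun i _ => Subsemiring.mul_mem _ ?_ (X_pow_mem_lifts _ _)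
  convert C_mem_lifts ofRealHom (a i).re
  exact Complex.ext (by simp) (by simp [ha])

theorem halfChoose_eq_ofReal (k : ℕ) :
    halfChoose k = ((∏ i ∈ range k, ((1 : ℝ) / 2 - i)) / k.factorial : ℝ) := by
  simp [halfChoose]

theorem bjk_im_eq_zero {a : Fin m → ℂ} (ha : ∀ i, (a i).im = 0) (j k : ℕ) :
    (bjk m a j k).im = 0 := by
  obtain ⟨x, hx⟩ := (lifts_iff_coeff_lifts _).mp (Subsemiring.pow_mem _ (Qa_mem_lifts ha) k) j
  rw [bjk, ← hx, halfChoose_eq_ofReal, ofRealHom_eq_coe, ← Complex.ofReal_mul, Complex.ofReal_im]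

theorem bjk_zero_zero (a : Fin m → ℂ) : bjk m a 0 0 = 1 := by
  simp [bjk, halfChoose]

theorem bjk_congr {a a' : Fin m → ℂ} {j : ℕ} (hj : j ≤ m)
    (h : ∀ i : Fin m, (i : ℕ) + 1 ≤ j → a i = a' i) (k : ℕ) : bjk m a j k = bjk m a' j k := by
  have hcoeff : ∀ d < j + 1, (Qa m a).coeff d = (Qa m a').coeff d := by
    rintro (_ | d) hd
    · rw [Qa_coeff_zero, Qa_coeff_zero]
    · have hd : d < m := by omega
      exact (Qa_coeff_succ a ⟨d, hd⟩).trans <| (h ⟨d, hd⟩ (by simp; omega)).trans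
        (Qa_coeff_succ a' ⟨d, hd⟩).symm
  rw [bjk, bjk, coeff_pow_eq_of_coeff_eq hcoeff k j j.lt_succ_self]

theorem bjk_update (a : Fin m → ℂ) (i : Fin m) (t : ℂ) (k : ℕ) :
    bjk m (Function.update a i t) (i + 1) k =
      bjk m (Function.update a i 0) (i + 1) k + if k = 1 then t / 2 else 0 := by
  rw [bjk, bjk, Qa_update, coeff_add_C_mul_X_pow_pow (X_dvd_Qa _) (by omega)]
  split_ifs with hk
  · simp [hk, halfChoose]
    ring
  · simp

end Coefficients

theorem Real.sin_nat_mul_pi_div_ne_zero {n m : ℕ} (hm : 0 < m) (h : ¬ m ∣ n) :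
    Real.sin (n * π / m) ≠ 0 := by
  rw [Ne, Real.sin_eq_zero_iff]
  rintro ⟨z, hz⟩
  have hzm : (z * m : ℤ) = n := by
    have : (z : ℝ) * m = n := by field_simp at hz; exact hz
    exact_mod_cast this
  exact h (Int.natCast_dvd_natCast.mp ⟨z, by rw [← hzm, mul_comm]⟩)

theorem Real.cos_nat_mul_pi_div_ne_zero {n m : ℕ} (hnm : n ≤ m) (h : 2 * n ≠ m) :
    Real.cos (n * π / m) ≠ 0 := by
  have hm : (0 : ℝ) < m := by exact_mod_cast (show 0 < m by omega)
  have hmem : (n : ℝ) * π / m ∈ Icc 0 π := by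
    refine ⟨by positivity, (div_le_iff₀ hm).mpr ?_⟩
    rw [mul_comm]
    gcongr
  intro hcos
  rw [← Real.cos_pi_div_two] at hcos
  have := Real.injOn_cos hmem ⟨by positivity, by linarith [Real.pi_pos]⟩ hcos
  field_simp at this
  exact h (by exact_mod_cast (by linarith [Real.pi_pos] : (2 * n : ℝ) = m))

theorem Real.forall_ne_neg_natCast_of_neg_one_lt {x : ℝ} (h1 : -1 < x) (h0 : x ≠ 0) :
    ∀ n : ℕ, x ≠ -n := by
  rintro (_ | n)
  · simpa using h0
  · push_cast
    linarith [(Nat.cast_nonneg n : (0 : ℝ) ≤ n)]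

theorem betaR_ne_zero {x y : ℝ} (hx : ∀ n : ℕ, x ≠ -n) (hy : ∀ n : ℕ, y ≠ -n)
    (hxy : ∀ n : ℕ, x + y ≠ -n) : betaR x y ≠ 0 :=
  div_ne_zero (mul_ne_zero (Real.Gamma_ne_zero hx) (Real.Gamma_ne_zero hy))
    (Real.Gamma_ne_zero hxy)

theorem Kmjk_succ_one {m i : ℕ} (hi : 1 ≤ i) (him : i < m) (h : 2 * i ≠ m) :
    Kmjk m (i + 1) 1 = (1 / m) * betaR (1 - i / m) (i / m - 1 / 2) := by
  rw [Kmjk, if_neg (by omega), if_neg (by omega), if_neg (by omega),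
    if_neg (by rintro ⟨_, h'⟩; omega)]
  push_cast
  ring_nf

theorem Kmjk_succ_one_ne_zero {m i : ℕ} (hi : 1 ≤ i) (him : i < m) (h : 2 * i ≠ m) :
    Kmjk m (i + 1) 1 ≠ 0 := by
  have hm : (0 : ℝ) < m := by exact_mod_cast (show 0 < m by omega)
  have hr0 : (0 : ℝ) < i / m := by positivity
  have hr1 : (i : ℝ) / m < 1 := (div_lt_one hm).mpr (by exact_mod_cast him)
  have hr2 : (i : ℝ) / m ≠ 1 / 2 := by
    rw [Ne, div_eq_div_iff hm.ne' two_ne_zero]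
    exact_mod_cast (by omega : i * 2 ≠ 1 * m)
  rw [Kmjk_succ_one hi him h]
  refine mul_ne_zero (by positivity) (betaR_ne_zero ?_ ?_ ?_)
  · exact Real.forall_ne_neg_natCast_of_neg_one_lt (by linarith) (sub_pos.mpr hr1).ne'
  · exact Real.forall_ne_neg_natCast_of_neg_one_lt (by linarith) (sub_ne_zero.mpr hr2)
  · exact Real.forall_ne_neg_natCast_of_neg_one_lt (by linarith) (by ring_nf; norm_num)

section Weights

open Finset

variable {m ℓ : ℕ}

def cWeight (m ℓ j k : ℕ) : ℝ :=
  -(2 / π) * (-1) ^ ((ℓ + 1) * k) * Kmjk m j k * Real.sin (((j : ℝ) - 1) * ℓ * π / m) *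
    Real.cos (((j : ℝ) - 1) * π / m)

theorem cCoeff_eq_sum_cWeight_mul_bjk (a : Fin m → ℂ) (j : ℕ) :
    cCoeff m ℓ a j = ∑ k ∈ range (j + 1), (cWeight m ℓ j k : ℂ) * bjk m a j k := by
  rw [cCoeff, mul_sum]
  refine sum_congr rfl fun k _ => ?_
  push_cast [cWeight]
  ring

theorem cWeight_zero_zero (hm : 3 ≤ m) :
    cWeight m ℓ 0 0 = 1 / π * betaR (1 / 2) (1 + 1 / m) * Real.sin (ℓ * π / m) := by
  have hcos : Real.cos (π / m) ≠ 0 := by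
    simpa using Real.cos_nat_mul_pi_div_ne_zero (n := 1) (m := m) (by omega) (by omega)
  have hK : Kmjk m 0 0 = betaR (1 / 2) (1 + 1 / m) / (2 * Real.cos (π / m)) := by
    simp [Kmjk]
  rw [cWeight, hK]
  simp only [CharP.cast_eq_zero, zero_sub, neg_mul, neg_div, Real.sin_neg,
    Real.cos_neg, mul_zero, pow_zero, mul_one]
  field_simp

theorem cWeight_one (k : ℕ) : cWeight m ℓ 1 k = 0 := by
  simp [cWeight]

theorem cWeight_succ_one_ne_zero (hco : Nat.Coprime m ℓ) {i : ℕ} (hi : 1 ≤ i) (him : i < m)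
    (h : 2 * i ≠ m) : cWeight m ℓ (i + 1) 1 ≠ 0 := by
  have hsin : Real.sin (((i + 1 : ℕ) - 1 : ℝ) * ℓ * π / m) ≠ 0 := by
    have hndvd : ¬ m ∣ i * ℓ := fun hd => by
      have := Nat.le_of_dvd (by omega) (hco.dvd_of_dvd_mul_right hd)
      omega
    simpa using Real.sin_nat_mul_pi_div_ne_zero (by omega) hndvd
  have hcos : Real.cos (((i + 1 : ℕ) - 1 : ℝ) * π / m) ≠ 0 := by
    simpa using Real.cos_nat_mul_pi_div_ne_zero him.le h
  have hπ : -(2 / π) ≠ 0 := by simp [Real.pi_ne_zero]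
  rw [cWeight]
  exact mul_ne_zero (mul_ne_zero (mul_ne_zero (mul_ne_zero hπ (by simp))
    (Kmjk_succ_one_ne_zero hi him h)) hsin) hcos

theorem cCoeff_im_eq_zero {a : Fin m → ℂ} (ha : ∀ i, (a i).im = 0) (j : ℕ) :
    (cCoeff m ℓ a j).im = 0 := by
  simp [cCoeff_eq_sum_cWeight_mul_bjk, Complex.im_sum, bjk_im_eq_zero ha]

theorem cCoeff_zero (hm : 3 ≤ m) (a : Fin m → ℂ) :
    cCoeff m ℓ a 0 = ((1 / π * betaR (1 / 2) (1 + 1 / m) * Real.sin (ℓ * π / m) : ℝ) : ℂ) := by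
  simp [cCoeff_eq_sum_cWeight_mul_bjk, bjk_zero_zero, cWeight_zero_zero hm]

theorem cCoeff_one (a : Fin m → ℂ) : cCoeff m ℓ a 1 = 0 := by
  simp [cCoeff_eq_sum_cWeight_mul_bjk, cWeight_one]

theorem cCoeff_congr {a a' : Fin m → ℂ} {j : ℕ} (hj : j ≤ m)
    (h : ∀ i : Fin m, (i : ℕ) + 1 ≤ j → a i = a' i) : cCoeff m ℓ a j = cCoeff m ℓ a' j := by
  simp only [cCoeff_eq_sum_cWeight_mul_bjk, bjk_congr hj h]

theorem cCoeff_update (a : Fin m → ℂ) (i : Fin m) (t : ℂ) :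
    cCoeff m ℓ (Function.update a i t) (i + 1) =
      cCoeff m ℓ (Function.update a i 0) (i + 1) + (cWeight m ℓ (i + 1) 1 / 2 : ℝ) * t := by
  rw [cCoeff_eq_sum_cWeight_mul_bjk, cCoeff_eq_sum_cWeight_mul_bjk,
    sum_congr rfl fun k _ => by rw [bjk_update, mul_add, mul_ite, mul_zero], sum_add_distrib,
    sum_ite_eq', if_pos (Finset.mem_range.mpr (by omega))]
  push_cast
  ring

end Weights

/-- Properties of the coefficients `c_{ℓ,j}(a)`:
(i) real for real `a`; (ii) `c_{ℓ,0} = (1/π)B(1/2,1+1/m)sin(ℓπ/m)` and `c_{ℓ,1} = 0`;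
(iii) `c_{ℓ,j}` depends only on `a₁,…,a_j` for `1 ≤ j ≤ m`; (iv) if `gcd(m,ℓ)=1` and
`2 ≤ j ≤ m`, `j ≠ m/2+1`, then `a_j ↦ c_{ℓ,j}(a)` is a nonconstant affine map. -/
theorem cCoeff_properties (m ℓ : ℕ) (hm : 3 ≤ m) :
    (∀ a : Fin m → ℂ, (∀ i, (a i).im = 0) → ∀ j ≤ m + 1, (cCoeff m ℓ a j).im = 0) ∧
    (∀ a : Fin m → ℂ,
      cCoeff m ℓ a 0 = (((1/π) * betaR (1/2) (1 + 1/m) * Real.sin (ℓ*π/m) : ℝ) : ℂ) ∧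
      cCoeff m ℓ a 1 = 0) ∧
    (∀ a a' : Fin m → ℂ, ∀ j : ℕ, 1 ≤ j → j ≤ m →
      (∀ i : Fin m, (i : ℕ) + 1 ≤ j → a i = a' i) → cCoeff m ℓ a j = cCoeff m ℓ a' j) ∧
    (Nat.gcd m ℓ = 1 → ∀ j : ℕ, 2 ≤ j → ∀ hjm : j ≤ m, 2*j ≠ m + 2 →
      ∀ a : Fin m → ℂ, ∃ p q : ℂ, q ≠ 0 ∧
        ∀ t : ℂ, cCoeff m ℓ (Function.update a (⟨j - 1, by omega⟩ : Fin m) t) j = p + q * t) := by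
  refine ⟨fun a ha j _ => cCoeff_im_eq_zero ha j,
    fun a => ⟨cCoeff_zero hm a, cCoeff_one a⟩,
    fun a a' j _ hj h => cCoeff_congr hj h, ?_⟩
  intro hco j hj2 hjm hne a
  obtain ⟨i, rfl⟩ : ∃ i, j = i + 1 := ⟨j - 1, by omega⟩
  refine ⟨_, _, ?_, cCoeff_update a ⟨i, by omega⟩⟩
  have hw := cWeight_succ_one_ne_zero (i := i) hco (by omega) (by omega) (by omega)
  exact Complex.ofReal_ne_zero.mpr (div_ne_zero hw two_ne_zero)
end
end
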